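/- Let θ := π/8 and set [m] := sin(mθ)/sin θ for m ∈ ℤ. Let M be the real 4×4 matrix with entries M₁₁ = M₃₃ = [3]/[4] + 1/([4]·√[3]), M₂₂ = M₄₄ = [3]/[4] − 1/([4]·√[3]), M₁₂ = M₂₁ = −1/√([2][4]), M₃₄ = M₄₃ = 1/√([2][4]), M₁₄ = M₄₁ = M₂₃ = M₃₂ = −√[4]/√([2][3]), and M₁₃ = M₃₁ = M₂₄ = M₄₂ = 0, where √ is the real square root. Then M is symmetric and M·M = [2]·M. -/

import Mathlib

/-- Trigonometric quantum integer `[m] = sin(m·π/8)/sin(π/8)`,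
i.e. `[m]_q` at `q = e^{2πi/16}`. -/
noncomputable def qi8 (m : ℤ) : ℝ :=
  Real.sin (m * (Real.pi / 8)) / Real.sin (Real.pi / 8)

/-- The 4×4 block U^5_{6} of the level-4 conformal-inclusion cell system. -/
noncomputable def U56 : Matrix (Fin 4) (Fin 4) ℝ :=
  !![qi8 3 / qi8 4 + 1 / (qi8 4 * Real.sqrt (qi8 3)),
       -(1 / Real.sqrt (qi8 2 * qi8 4)), 0,
       -(Real.sqrt (qi8 4) / Real.sqrt (qi8 2 * qi8 3));
     -(1 / Real.sqrt (qi8 2 * qi8 4)),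
       qi8 3 / qi8 4 - 1 / (qi8 4 * Real.sqrt (qi8 3)),
       -(Real.sqrt (qi8 4) / Real.sqrt (qi8 2 * qi8 3)), 0;
     0, -(Real.sqrt (qi8 4) / Real.sqrt (qi8 2 * qi8 3)),
       qi8 3 / qi8 4 + 1 / (qi8 4 * Real.sqrt (qi8 3)),
       1 / Real.sqrt (qi8 2 * qi8 4);
     -(Real.sqrt (qi8 4) / Real.sqrt (qi8 2 * qi8 3)), 0,
       1 / Real.sqrt (qi8 2 * qi8 4),
       qi8 3 / qi8 4 - 1 / (qi8 4 * Real.sqrt (qi8 3))]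

/-!
`U56` has the pattern `M(a, b, c, d)` of `heckeBlock` with `a = [3]/[4]`, `b = 1/([4]√[3])`,
`c = 1/√([2][4])`, `d = √[4]/√([2][3])`, and any such matrix satisfies `M² = 2a·M` as soon as
`b² + c² + d² = a²`. Here `2a = [2]` is the identity `[2][4] = 2[3]`, i.e. the recursion
`[2][4] = [3] + [5]` together with `[5] = [8 - 3] = [3]` at `θ = π/8`. After clearing the
square roots, `b² + c² + d² = a²` becomes `[2][3]³ = [2] + [3][4] + [4]³`, which follows from
the recursions `[2]² = 1 + [3]`, `[2][3] = [2] + [4]`, `[2][4] = 2[3]`.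
-/

open Real

section HeckeBlock

variable {R : Type*} [CommRing R] (a b c d : R)

def heckeBlock : Matrix (Fin 4) (Fin 4) R :=
  !![a + b, -c, 0, -d;
     -c, a - b, -d, 0;
     0, -d, a + b, c;
     -d, 0, c, a - b]

theorem heckeBlock_isSymm : (heckeBlock a b c d).IsSymm := by
  ext i j
  fin_cases i <;> fin_cases j <;> rfl

variable {a b c d} in
theorem heckeBlock_mul_self (h : b ^ 2 + c ^ 2 + d ^ 2 = a ^ 2) :
    heckeBlock a b c d * heckeBlock a b c d = (2 * a) • heckeBlock a b c d := by
  ext i j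
  fin_cases i <;> fin_cases j <;>
    simp [heckeBlock, Matrix.mul_apply, Fin.sum_univ_four] <;>
    first | ring1 | linear_combination h

end HeckeBlock

noncomputable def qint (θ : ℝ) (m : ℤ) : ℝ := sin (m * θ) / sin θ

section QInt

variable {θ : ℝ}

theorem qint_one (h : sin θ ≠ 0) : qint θ 1 = 1 := by
  simp [qint, h]

theorem qint_two_mul (h : sin θ ≠ 0) (n : ℤ) :
    qint θ 2 * qint θ n = qint θ (n - 1) + qint θ (n + 1) := by
  simp only [qint]
  push_cast
  rw [sub_mul, add_mul, one_mul, sin_sub, sin_add, sin_two_mul]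
  field_simp
  ring

theorem qint_sub_of_mul_eq_pi {k : ℤ} (h : k * θ = π) (m : ℤ) :
    qint θ (k - m) = qint θ m := by
  simp only [qint]
  push_cast
  rw [sub_mul, h, sin_pi_sub]

theorem qint_pos (hθ : 0 < θ) {m : ℤ} (hm : 0 < m) (hmθ : m * θ < π) : 0 < qint θ m := by
  have hm_one : (1 : ℝ) ≤ m := by exact_mod_cast hm
  exact div_pos (sin_pos_of_pos_of_lt_pi (by positivity) hmθ)
    (sin_pos_of_pos_of_lt_pi hθ (by nlinarith))

end QInt

theorem mul_cube_eq_of_fusion {R : Type*} [CommRing R] {x y z : R}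
    (h₂₂ : x ^ 2 = 1 + y) (h₂₃ : x * y = x + z) (h₂₄ : x * z = 2 * y) :
    x * y ^ 3 = x + y * z + z ^ 3 := by
  have hyy : y ^ 2 = 1 + 2 * y := by linear_combination (1 - y) * h₂₂ + x * h₂₃ + h₂₄
  have hyz : y * z = 2 * x + z := by linear_combination (1 - y) * h₂₃ + x * hyy
  have hzz : z ^ 2 = 2 + 2 * y := by
    linear_combination (-z) * h₂₃ + y * h₂₄ - h₂₄ + 2 * hyy
  linear_combination (3 + 2 * y) * h₂₃ + x * y * hyy - z * hzz - hyz

theorem sq_add_sq_add_sq_of_mul_cube_eq {x y z : ℝ} (hx : 0 < x) (hy : 0 < y) (hz : 0 < z)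
    (h : x * y ^ 3 = x + y * z + z ^ 3) :
    (1 / (z * √y)) ^ 2 + (1 / √(x * z)) ^ 2 + (√z / √(x * y)) ^ 2 = (y / z) ^ 2 := by
  rw [div_pow, div_pow, div_pow, div_pow, mul_pow, sq_sqrt hy.le, sq_sqrt (by positivity),
    sq_sqrt hz.le, sq_sqrt (by positivity)]
  field_simp
  linear_combination -h

section PiDivEight

lemma qi8_eq_qint : qi8 = qint (π / 8) := rfl

lemma sin_pi_div_eight_ne_zero : sin (π / 8) ≠ 0 :=
  (sin_pos_of_pos_of_lt_pi (by positivity) (by linarith [pi_pos])).ne'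

lemma qi8_pos {m : ℤ} (hm : 0 < m) (hm8 : m < 8) : 0 < qi8 m := by
  have hm8' : (m : ℝ) < 8 := by exact_mod_cast hm8
  exact qint_pos (by positivity) hm (by nlinarith [pi_pos])

lemma qi8_two_sq : qi8 2 ^ 2 = 1 + qi8 3 := by
  simpa [sq, qi8_eq_qint, qint_one sin_pi_div_eight_ne_zero] using
    qint_two_mul sin_pi_div_eight_ne_zero 2

lemma qi8_two_mul_three : qi8 2 * qi8 3 = qi8 2 + qi8 4 := by
  simpa [qi8_eq_qint] using qint_two_mul sin_pi_div_eight_ne_zero 3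

lemma qi8_two_mul_four : qi8 2 * qi8 4 = 2 * qi8 3 := by
  have h₅ := qint_sub_of_mul_eq_pi (θ := π / 8) (k := 8) (by push_cast; ring) 3
  norm_num at h₅
  simpa [qi8_eq_qint, h₅, two_mul] using qint_two_mul sin_pi_div_eight_ne_zero 4

end PiDivEight

/-- The 4×4 block U^5_6 is symmetric and satisfies the Hecke relation. -/
theorem level4_fourByFour_symm_hecke_block :
    U56.IsSymm ∧ U56 * U56 = qi8 2 • U56 := by
  have hU : U56 = heckeBlock (qi8 3 / qi8 4) (1 / (qi8 4 * √(qi8 3)))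
      (1 / √(qi8 2 * qi8 4)) (√(qi8 4) / √(qi8 2 * qi8 3)) := rfl
  have htwo : 2 * (qi8 3 / qi8 4) = qi8 2 := by
    field_simp [(qi8_pos (m := 4) (by norm_num) (by norm_num)).ne']
    linear_combination -qi8_two_mul_four
  refine ⟨hU ▸ heckeBlock_isSymm _ _ _ _, ?_⟩
  have hecke := heckeBlock_mul_self <| sq_add_sq_add_sq_of_mul_cube_eq
    (qi8_pos (m := 2) (by norm_num) (by norm_num)) (qi8_pos (m := 3) (by norm_num) (by norm_num))
    (qi8_pos (m := 4) (by norm_num) (by norm_num))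
    (mul_cube_eq_of_fusion qi8_two_sq qi8_two_mul_three qi8_two_mul_four)
  rwa [htwo, ← hU] at hecke
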